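/- If G is an α_i-metric graph, then the diameter of its center C(G) is at most 3i+2, i.e., any two central vertices are at distance at most 3i+2. -/

import Mathlib

open SimpleGraph

variable {V : Type*}

/-- `Itv G u v x` means `x` lies on a shortest `(u,v)`-path, i.e. `x ∈ I(u,v)`. -/
def Itv (G : SimpleGraph V) (u v x : V) : Prop :=
  G.dist u x + G.dist x v = G.dist u v

/-- `G` is an `α_i`-metric graph. -/
def AlphaI (G : SimpleGraph V) (i : ℕ) : Prop :=
  ∀ u v w x : V, Itv G u w v → Itv G v x w → G.Adj v w →
    G.dist u v + G.dist v x ≤ G.dist u x + i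

/-- Eccentricity of a vertex. -/
noncomputable def ecc (G : SimpleGraph V) [Fintype V] (v : V) : ℕ :=
  Finset.univ.sup (fun u => G.dist v u)

/-- Radius of the graph. -/
noncomputable def grad (G : SimpleGraph V) [Fintype V] [Nonempty V] : ℕ :=
  Finset.univ.inf' Finset.univ_nonempty (fun v => ecc G v)

/-- Diameter of the graph. -/
noncomputable def gdiam (G : SimpleGraph V) [Fintype V] : ℕ :=
  Finset.univ.sup (fun v => ecc G v)

/-
Let `x, y` be central vertices, `r` the radius, `p₀ = x, …, p_k = y` a geodesic with `k ≥ 3i+3`,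
and `u` a vertex farthest from `p_{i+1}`, so `d(u,p_{i+1}) ≥ r ≥ d(u,x), d(u,y)`.
Everything rests on one consequence of the `α_i` condition: if `c ∈ I(v,z)` and
`d(u,v) < d(u,c)`, then `d(u,c) + d(c,z) ≤ d(u,z) + i` (walk from `v` towards `c` up to the first
edge on which the distance to `u` increases and apply `α_i` there). It forces `d(u,pⱼ) = r` for
`j = 0` and for every `j ≥ i+1`. For the neighbour `h` of `x` towards `u` we have `d(u,h) < r`,
and the same fact shows that each stretch `p_{m(i+1)} … p_{(m+1)(i+1)}` adds at most `i` to the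
distance from `h`; hence `3i+3 = d(x,p_{3i+3}) ≤ 1 + 1 + 3i`.
-/

lemma dist_le_ecc [Fintype V] (G : SimpleGraph V) (v z : V) : G.dist v z ≤ ecc G v :=
  Finset.le_sup (Finset.mem_univ z)

lemma exists_ecc_eq_dist [Fintype V] [Nonempty V] (G : SimpleGraph V) (v : V) :
    ∃ w, ecc G v = G.dist v w := by
  obtain ⟨w, -, hw⟩ := Finset.exists_mem_eq_sup Finset.univ Finset.univ_nonempty (G.dist v)
  exact ⟨w, hw⟩

lemma grad_le_ecc [Fintype V] [Nonempty V] (G : SimpleGraph V) (v : V) : grad G ≤ ecc G v :=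
  Finset.inf'_le _ (Finset.mem_univ v)

lemma Itv.symm {G : SimpleGraph V} {u v x : V} (h : Itv G u v x) : Itv G v u x := by
  unfold Itv at *
  rw [G.dist_comm (u := v) (v := x), G.dist_comm (u := x) (v := u),
    G.dist_comm (u := v) (v := u)]
  omega

def IsGeodesic (G : SimpleGraph V) (p : ℕ → V) (k : ℕ) : Prop :=
  ∀ a b, a ≤ b → b ≤ k → G.dist (p a) (p b) = b - a

lemma IsGeodesic.itv {G : SimpleGraph V} {p : ℕ → V} {k : ℕ} (hp : IsGeodesic G p k)
    {a b c : ℕ} (hab : a ≤ b) (hbc : b ≤ c) (hck : c ≤ k) : Itv G (p a) (p c) (p b) := by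
  unfold Itv
  rw [hp a b hab (hbc.trans hck), hp b c hbc hck, hp a c (hab.trans hbc) hck]
  omega

theorem SimpleGraph.Connected.exists_isGeodesic {G : SimpleGraph V} (hG : G.Connected)
    (u v : V) : ∃ p, p 0 = u ∧ p (G.dist u v) = v ∧ IsGeodesic G p (G.dist u v) := by
  obtain ⟨W, hW⟩ := hG.exists_walk_length_eq_dist u v
  refine ⟨W.getVert, W.getVert_zero, hW ▸ W.getVert_length, fun a b hab hb => ?_⟩
  have hmid : G.dist (W.getVert a) (W.getVert b) ≤ b - a := by
    have h := G.dist_le ((W.drop a).take (b - a))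
    rw [Walk.take_length, Walk.drop_getVert, Nat.add_sub_cancel' hab] at h
    omega
  have hstart : G.dist u (W.getVert a) ≤ a := by
    have h := G.dist_le (W.take a)
    rw [Walk.take_length] at h
    omega
  have hend : G.dist (W.getVert b) v ≤ W.length - b := by
    simpa using G.dist_le (W.drop b)
  have h₁ := hG.dist_triangle (u := u) (v := W.getVert a) (w := W.getVert b)
  have h₂ := hG.dist_triangle (u := u) (v := W.getVert b) (w := v)
  omega

theorem SimpleGraph.Connected.exists_adj_dist_add_one {G : SimpleGraph V} (hG : G.Connected)
    {u v : V} (huv : u ≠ v) : ∃ w, G.Adj u w ∧ G.dist w v + 1 = G.dist u v := by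
  have hpos := hG.pos_dist_of_ne huv
  obtain ⟨q, hq0, hqv, hq⟩ := hG.exists_isGeodesic u v
  refine ⟨q 1, G.dist_eq_one_iff_adj.mp ?_, ?_⟩
  · rw [← hq0, hq 0 1 (by omega) hpos]
  · have h := hq 1 _ hpos le_rfl
    rw [hqv] at h
    omega

namespace AlphaI

variable {G : SimpleGraph V} {i : ℕ}

theorem dist_add_dist_le_of_itv (hG : G.Connected) (hα : AlphaI G i) {u v c z : V}
    (huv : G.dist u v < G.dist u c) (hc : Itv G v z c) :
    G.dist u c + G.dist c z ≤ G.dist u z + i := by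
  induction hn : G.dist v c generalizing v with
  | zero =>
    rw [hG.dist_eq_zero_iff] at hn
    exact absurd huv (hn ▸ lt_irrefl _)
  | succ n ih =>
    obtain ⟨w, hadj, hwc⟩ := hG.exists_adj_dist_add_one (u := v) (v := c) (by
      rintro rfl
      simp at hn)
    have hvw : G.dist v w = 1 := G.dist_eq_one_iff_adj.mpr hadj
    have hwz : Itv G w z c := by
      unfold Itv at *
      have := hG.dist_triangle (u := v) (v := w) (w := z)
      have := hG.dist_triangle (u := w) (v := c) (w := z)
      omega
    have huw : G.dist u w ≤ G.dist u v + 1 := hvw ▸ hG.dist_triangle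
    by_cases hstep : G.dist u w = G.dist u v + 1
    · -- `α_i` applied to the edge `vw`, on which the distance to `u` goes up
      have key := hα u v w z (by unfold Itv; omega) (by unfold Itv at *; omega) hadj
      have := hG.dist_triangle (u := u) (v := v) (w := c)
      unfold Itv at hc
      omega
    · exact ih (by omega) hwz (by omega)

theorem dist_le_dist_add_of_lt (hG : G.Connected) (hα : AlphaI G i) {u v c z : V}
    (huv : G.dist u v < G.dist u c) (huz : G.dist u z ≤ G.dist u c)
    (hcz : G.dist c z ≤ i + 1) : G.dist v z ≤ G.dist v c + i := by
  by_contra! h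
  have hc : Itv G v z c := by
    have := hG.dist_triangle (u := v) (v := c) (w := z)
    unfold Itv
    omega
  have := hα.dist_add_dist_le_of_itv hG huv hc
  unfold Itv at hc
  omega

section Geodesic

variable {p : ℕ → V} {k r : ℕ} {u : V}

theorem dist_eq_of_isGeodesic (hG : G.Connected) (hα : AlphaI G i) (hp : IsGeodesic G p k)
    (h0 : G.dist u (p 0) ≤ r) (hk : G.dist u (p k) ≤ r) (ht : r ≤ G.dist u (p (i + 1)))
    {j : ℕ} (hj : i + 1 ≤ j) (hjk : j ≤ k) : G.dist u (p j) = r := by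
  have hj0 := hp 0 j (Nat.zero_le j) hjk
  apply le_antisymm
  · by_contra! hlt
    have := hα.dist_add_dist_le_of_itv hG (hk.trans_lt hlt)
      (hp.itv (Nat.zero_le j) hjk le_rfl).symm
    rw [G.dist_comm (u := p j)] at this
    omega
  · by_contra! hlt
    have := hα.dist_add_dist_le_of_itv hG (hlt.trans_le ht) (hp.itv (Nat.zero_le _) hj hjk).symm
    rw [G.dist_comm (u := p (i + 1)), hp 0 _ (Nat.zero_le _) (hj.trans hjk)] at this
    omega

theorem dist_zero_eq_of_isGeodesic (hG : G.Connected) (hα : AlphaI G i)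
    (hp : IsGeodesic G p k) (hik : 2 * i + 2 ≤ k)
    (h0 : G.dist u (p 0) ≤ r) (hk : G.dist u (p k) ≤ r) (ht : r ≤ G.dist u (p (i + 1))) :
    G.dist u (p 0) = r := by
  by_contra! hne
  have := hα.dist_add_dist_le_of_itv hG ((lt_of_le_of_ne h0 hne).trans_le ht)
    (hp.itv (Nat.zero_le _) (by omega) le_rfl)
  rw [hp _ k (by omega) le_rfl] at this
  omega

theorem dist_le_dist_add_mul_of_isGeodesic (hG : G.Connected) (hα : AlphaI G i)
    (hp : IsGeodesic G p k) {h : V} (huh : G.dist u h < r) {n : ℕ} (hn : n * (i + 1) ≤ k)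
    (hflat : ∀ m ≤ n, G.dist u (p (m * (i + 1))) = r) :
    G.dist h (p (n * (i + 1))) ≤ G.dist h (p 0) + n * i := by
  induction n with
  | zero => simp
  | succ n ih =>
    rw [Nat.succ_mul] at hn
    have hstretch : G.dist (p (n * (i + 1))) (p ((n + 1) * (i + 1))) = i + 1 := by
      rw [hp _ _ (by rw [Nat.succ_mul]; omega) (by rwa [Nat.succ_mul]), Nat.succ_mul]
      omega
    have hjump := hα.dist_le_dist_add_of_lt hG (huh.trans_eq (hflat n (by omega)).symm)
      ((hflat (n + 1) le_rfl).trans (hflat n (by omega)).symm).le hstretch.le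
    have := ih (by omega) fun m hm => hflat m (by omega)
    rw [Nat.succ_mul n i]
    omega

end Geodesic

end AlphaI

theorem stmt_6 [Fintype V] [Nonempty V] (G : SimpleGraph V) (hG : G.Connected) (i : ℕ)
    (hα : AlphaI G i) (x y : V) (hx : ecc G x = grad G) (hy : ecc G y = grad G) :
    G.dist x y ≤ 3 * i + 2 := by
  by_contra! hk
  set r := grad G
  obtain ⟨p, hp0, hpk, hp⟩ := hG.exists_isGeodesic x y
  obtain ⟨u, hu⟩ := exists_ecc_eq_dist G (p (i + 1))
  have hux : G.dist u (p 0) ≤ r := by rw [hp0, G.dist_comm, ← hx]; exact dist_le_ecc G x u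
  have huy : G.dist u (p (G.dist x y)) ≤ r := by
    rw [hpk, G.dist_comm, ← hy]; exact dist_le_ecc G y u
  have hut : r ≤ G.dist u (p (i + 1)) := by rw [G.dist_comm, ← hu]; exact grad_le_ecc G _
  have hflat : ∀ m ≤ 3, G.dist u (p (m * (i + 1))) = r := by
    rintro (_ | m) hm
    · simpa using hα.dist_zero_eq_of_isGeodesic hG hp (by omega) hux huy hut
    · exact hα.dist_eq_of_isGeodesic hG hp hux huy hut (by nlinarith) (by nlinarith)
  have hxu : G.dist x u = r := by simpa [hp0, G.dist_comm] using hflat 0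
  have hxy : G.dist x y ≤ r := hx ▸ dist_le_ecc G x y
  obtain ⟨h, hxh, hhu⟩ := hG.exists_adj_dist_add_one (u := x) (v := u) (by
    rintro rfl
    simp at hxu
    omega)
  have hchain := hα.dist_le_dist_add_mul_of_isGeodesic hG hp (h := h) (n := 3)
    (by rw [G.dist_comm]; omega) (by omega) hflat
  have hfar := hp 0 (3 * (i + 1)) (by omega) (by omega)
  have := hG.dist_triangle (u := x) (v := h) (w := p (3 * (i + 1)))
  have hxh₁ : G.dist x h = 1 := G.dist_eq_one_iff_adj.mpr hxh
  have hhx₁ : G.dist h x = 1 := G.dist_eq_one_iff_adj.mpr hxh.symm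
  rw [hp0] at hfar hchain
  omega
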